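/- arXiv:2110.03753 — 4 statements merged into one kernel-verified Lean document; each statement's English description precedes it below -/
import Mathlib

section
/- For every integer d ≥ 1 and every subset S ⊆ [d] of even cardinality, the map σ_S is an automorphism of the CFI gadget X_d, i.e., σ_S is a bijection of the vertices of X_d that maps edges to edges and non-edges to non-edges. -/
open scoped symmDiff

inductive CFIVertex (d : ℕ) : Type where
  | a : Fin d → CFIVertex d
  | b : Fin d → CFIVertex d
  | m : {S : Finset (Fin d) // Even S.card} → CFIVertex d

def CFIAdj (d : ℕ) : CFIVertex d → CFIVertex d → Prop
  | .m S, .a i => i ∈ S.1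
  | .a i, .m S => i ∈ S.1
  | .m S, .b i => i ∉ S.1
  | .b i, .m S => i ∉ S.1
  | _, _ => False

def CFI (d : ℕ) : SimpleGraph (CFIVertex d) where
  Adj := CFIAdj d
  symm := by
    constructor
    intro x y h
    cases x <;> cases y <;> exact h
  loopless := by
    constructor
    intro x
    cases x <;> exact fun h => h

lemma even_card_symmDiff {α : Type*} [DecidableEq α] {S T : Finset α}
    (hS : Even S.card) (hT : Even T.card) : Even ((T ∆ S).card) := by
  have h0 : (T ∆ S).card = (T \ S).card + (S \ T).card := by
    rw [symmDiff_def]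
    exact Finset.card_union_of_disjoint disjoint_sdiff_sdiff
  have h1 : (T \ S).card + (T ∩ S).card = T.card := Finset.card_sdiff_add_card_inter T S
  have h2 : (S \ T).card + (S ∩ T).card = S.card := Finset.card_sdiff_add_card_inter S T
  have h3 : (T ∩ S).card = (S ∩ T).card := by rw [Finset.inter_comm]
  rw [Nat.even_iff] at *
  omega

def sigmaS (d : ℕ) (S : Finset (Fin d)) (hS : Even S.card) : CFIVertex d → CFIVertex d
  | .a i => if i ∈ S then .b i else .a i
  | .b i => if i ∈ S then .a i else .b i
  | .m T => .m ⟨T.1 ∆ S, even_card_symmDiff hS T.2⟩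

/-- For every integer d ≥ 1 and every subset S ⊆ [d] of even cardinality,
the map σ_S is an automorphism of the CFI gadget X_d: it is a bijection of the
vertices of X_d mapping edges to edges and non-edges to non-edges. -/
theorem cfi_sigma_isAutomorphism (d : ℕ) (hd : 1 ≤ d)
    (S : Finset (Fin d)) (hS : Even S.card) :
    Function.Bijective (sigmaS d S hS) ∧
      ∀ x y : CFIVertex d,
        (CFI d).Adj (sigmaS d S hS x) (sigmaS d S hS y) ↔ (CFI d).Adj x y := by
  have hinv : Function.Involutive (sigmaS d S hS) := by
    intro x
    cases x with
    | a i => by_cases h : i ∈ S <;> simp [sigmaS, h]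
    | b i => by_cases h : i ∈ S <;> simp [sigmaS, h]
    | m T => simp [sigmaS, symmDiff_symmDiff_cancel_right]
  refine ⟨hinv.bijective, ?_⟩
  intro x y
  cases x <;> cases y <;>
    simp only [sigmaS, CFI, CFIAdj] <;>
    first
      | rfl
      | (rename_i i j; by_cases h : i ∈ S <;> by_cases h2 : j ∈ S <;>
          simp [CFIAdj, h, h2, Finset.mem_symmDiff])
      | (rename_i i T; by_cases h : i ∈ S <;>
          simp [CFIAdj, h, Finset.mem_symmDiff])
      | (rename_i T i; by_cases h : i ∈ S <;>
          simp [CFIAdj, h, Finset.mem_symmDiff])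
end

section
/- For every integer d ≥ 1, the automorphisms φ of the CFI gadget X_d satisfying φ({a_i, b_i}) = {a_i, b_i} for every i ∈ [d] are exactly the maps σ_S with S ⊆ [d] of even cardinality, with distinct even subsets S giving distinct automorphisms; consequently there are exactly 2^(d−1) such automorphisms. -/
open scoped symmDiff

lemma sigmaS_involutive (d : ℕ) (S : Finset (Fin d)) (hS : Even S.card) (x : CFIVertex d) :
    sigmaS d S hS (sigmaS d S hS x) = x := by
  cases x with
  | a i => by_cases h : i ∈ S <;> simp [sigmaS, h]
  | b i => by_cases h : i ∈ S <;> simp [sigmaS, h]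
  | m T => exact congrArg CFIVertex.m (Subtype.ext (symmDiff_symmDiff_cancel_right S T.1))

lemma sigmaS_adj (d : ℕ) (S : Finset (Fin d)) (hS : Even S.card) (x y : CFIVertex d) :
    CFIAdj d (sigmaS d S hS x) (sigmaS d S hS y) ↔ CFIAdj d x y := by
  cases x with
  | a i =>
    cases y with
    | a j => by_cases h : i ∈ S <;> by_cases h' : j ∈ S <;> simp [sigmaS, h, h', CFIAdj]
    | b j => by_cases h : i ∈ S <;> by_cases h' : j ∈ S <;> simp [sigmaS, h, h', CFIAdj]
    | m T =>
      by_cases h : i ∈ S <;>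
        simp [sigmaS, h, CFIAdj, Finset.mem_symmDiff] <;> tauto
  | b i =>
    cases y with
    | a j => by_cases h : i ∈ S <;> by_cases h' : j ∈ S <;> simp [sigmaS, h, h', CFIAdj]
    | b j => by_cases h : i ∈ S <;> by_cases h' : j ∈ S <;> simp [sigmaS, h, h', CFIAdj]
    | m T =>
      by_cases h : i ∈ S <;>
        simp [sigmaS, h, CFIAdj, Finset.mem_symmDiff] <;> tauto
  | m T =>
    cases y with
    | a j =>
      by_cases h : j ∈ S <;>
        simp [sigmaS, h, CFIAdj, Finset.mem_symmDiff] <;> tauto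
    | b j =>
      by_cases h : j ∈ S <;>
        simp [sigmaS, h, CFIAdj, Finset.mem_symmDiff] <;> tauto
    | m U => simp [sigmaS, CFIAdj]

def sigmaIso (d : ℕ) (S : Finset (Fin d)) (hS : Even S.card) : (CFI d) ≃g (CFI d) where
  toFun := sigmaS d S hS
  invFun := sigmaS d S hS
  left_inv := sigmaS_involutive d S hS
  right_inv := sigmaS_involutive d S hS
  map_rel_iff' := by intro x y; exact sigmaS_adj d S hS x y

lemma sigmaIso_pairs (d : ℕ) (S : Finset (Fin d)) (hS : Even S.card) (i : Fin d) :
    (sigmaIso d S hS : CFIVertex d → CFIVertex d) '' {CFIVertex.a i, CFIVertex.b i}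
      = {CFIVertex.a i, CFIVertex.b i} := by
  rw [Set.image_pair]
  show ({sigmaS d S hS (.a i), sigmaS d S hS (.b i)} : Set (CFIVertex d)) = _
  by_cases h : i ∈ S <;> simp [sigmaS, h, Set.pair_comm]

lemma cfi_classify (d : ℕ) (hd : 1 ≤ d) (φ : (CFI d) ≃g (CFI d))
    (hφ : ∀ i : Fin d,
      (φ : CFIVertex d → CFIVertex d) '' {CFIVertex.a i, CFIVertex.b i}
        = {CFIVertex.a i, CFIVertex.b i}) :
    ∃ (S : Finset (Fin d)) (hS : Even S.card), ∀ x, φ x = sigmaS d S hS x := by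
  classical
  -- For each i, φ fixes or swaps the pair
  have hpair : ∀ i : Fin d,
      (φ (.a i) = .a i ∧ φ (.b i) = .b i) ∨ (φ (.a i) = .b i ∧ φ (.b i) = .a i) := by
    intro i
    have h := hφ i
    rw [Set.image_pair, Set.pair_eq_pair_iff] at h
    exact h
  set S : Finset (Fin d) := Finset.univ.filter (fun i => φ (.a i) = .b i) with hSdef
  have hmemS : ∀ i, i ∈ S ↔ φ (.a i) = .b i := by
    intro i; simp [hSdef]
  have ha : ∀ i, φ (.a i) = if i ∈ S then .b i else .a i := by
    intro i
    by_cases h : i ∈ S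
    · simp [h, (hmemS i).1 h]
    · rcases hpair i with ⟨h1, _⟩ | ⟨h1, _⟩
      · simp [h, h1]
      · exact absurd ((hmemS i).2 h1) h
  have hb : ∀ i, φ (.b i) = if i ∈ S then .a i else .b i := by
    intro i
    by_cases h : i ∈ S
    · rcases hpair i with ⟨h1, _⟩ | ⟨_, h2⟩
      · exact absurd ((hmemS i).1 h) (by simp [h1])
      · simp [h, h2]
    · rcases hpair i with ⟨_, h2⟩ | ⟨h1, _⟩
      · simp [h, h2]
      · exact absurd ((hmemS i).2 h1) h
  -- φ sends m-vertices to m-vertices, with carrier T ∆ S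
  have hmU : ∀ T : {S' : Finset (Fin d) // Even S'.card},
      ∃ U : {S' : Finset (Fin d) // Even S'.card}, φ (.m T) = .m U ∧ U.1 = T.1 ∆ S := by
    intro T
    set i0 : Fin d := ⟨0, hd⟩
    -- φ (.m T) is adjacent to φ (.a i0) or φ (.b i0), each of which is an a/b vertex
    have hAB : ∃ v : CFIVertex d, (CFI d).Adj (φ (.m T)) v ∧
        ((∃ j, v = .a j) ∨ (∃ j, v = .b j)) := by
      by_cases h0 : i0 ∈ T.1
      · refine ⟨φ (.a i0), φ.map_adj_iff.2 h0, ?_⟩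
        rw [ha i0]; by_cases h : i0 ∈ S <;> simp [h]
      · refine ⟨φ (.b i0), φ.map_adj_iff.2 h0, ?_⟩
        rw [hb i0]; by_cases h : i0 ∈ S <;> simp [h]
    obtain ⟨v, hadj, hv⟩ := hAB
    obtain ⟨U, hU⟩ : ∃ U, φ (.m T) = CFIVertex.m U := by
      rcases hφm : φ (.m T) with j | j | U
      · rw [hφm] at hadj
        rcases hv with ⟨k, hk⟩ | ⟨k, hk⟩ <;> subst hk <;> exact absurd hadj (by exact id)
      · rw [hφm] at hadj
        rcases hv with ⟨k, hk⟩ | ⟨k, hk⟩ <;> subst hk <;> exact absurd hadj (by exact id)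
      · exact ⟨U, rfl⟩
    refine ⟨U, hU, ?_⟩
    ext i
    have key : (CFI d).Adj (φ (.m T)) (φ (.a i)) ↔ i ∈ T.1 := φ.map_adj_iff
    rw [hU, ha i] at key
    rw [Finset.mem_symmDiff]
    by_cases h : i ∈ S
    · simp only [h, if_pos] at key
      have : (i ∉ U.1) ↔ i ∈ T.1 := key
      tauto
    · simp only [h, if_neg, not_false_iff] at key
      have : (i ∈ U.1) ↔ i ∈ T.1 := key
      tauto
  -- S has even cardinality
  obtain ⟨U0, _, hU02⟩ := hmU ⟨∅, by simp⟩
  have hS : Even S.card := by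
    have : U0.1 = S := by rw [hU02]; exact bot_symmDiff S
    rw [← this]; exact U0.2
  refine ⟨S, hS, fun x => ?_⟩
  cases x with
  | a i => rw [ha i]; rfl
  | b i => rw [hb i]; rfl
  | m T =>
    obtain ⟨U, hU1, hU2⟩ := hmU T
    rw [hU1]
    exact congrArg CFIVertex.m (Subtype.ext hU2)

lemma even_card_symmDiff_iff {α : Type*} [DecidableEq α] (S T : Finset α) :
    Even ((T ∆ S).card) ↔ (Even T.card ↔ Even S.card) := by
  have h0 : (T ∆ S).card = (T \ S).card + (S \ T).card := by
    rw [symmDiff_def]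
    exact Finset.card_union_of_disjoint disjoint_sdiff_sdiff
  have h1 : (T \ S).card + (T ∩ S).card = T.card := Finset.card_sdiff_add_card_inter T S
  have h2 : (S \ T).card + (S ∩ T).card = S.card := Finset.card_sdiff_add_card_inter S T
  have h3 : (T ∩ S).card = (S ∩ T).card := by rw [Finset.inter_comm]
  simp only [Nat.even_iff] at *
  omega

lemma card_even_subsets (d : ℕ) (hd : 1 ≤ d) :
    (Finset.univ.filter fun S : Finset (Fin d) => Even S.card).card = 2 ^ (d - 1) := by
  classical
  set i0 : Fin d := ⟨0, hd⟩
  have flip : ∀ S : Finset (Fin d), Even ((S ∆ {i0}).card) ↔ ¬ Even S.card := by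
    intro S
    rw [even_card_symmDiff_iff]
    simp [Nat.even_iff]
  have hbij : (Finset.univ.filter fun S : Finset (Fin d) => Even S.card).card
      = (Finset.univ.filter fun S : Finset (Fin d) => ¬ Even S.card).card := by
    refine Finset.card_bij' (fun S _ => S ∆ {i0}) (fun S _ => S ∆ {i0}) ?_ ?_ ?_ ?_
    · intro S hS
      simp only [Finset.mem_filter, Finset.mem_univ, true_and] at hS ⊢
      rw [flip]; exact not_not_intro hS
    · intro S hS
      simp only [Finset.mem_filter, Finset.mem_univ, true_and] at hS ⊢
      rw [flip]; exact hS
    · intro S _; exact symmDiff_symmDiff_cancel_right {i0} S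
    · intro S _; exact symmDiff_symmDiff_cancel_right {i0} S
  have hsum : (Finset.univ.filter fun S : Finset (Fin d) => Even S.card).card
      + (Finset.univ.filter fun S : Finset (Fin d) => ¬ Even S.card).card
      = 2 ^ d := by
    rw [Finset.card_filter_add_card_filter_not]
    rw [Finset.card_univ, Fintype.card_finset, Fintype.card_fin]
  have hpow : 2 ^ d = 2 * 2 ^ (d - 1) := by
    conv_lhs => rw [show d = (d - 1) + 1 by omega]
    ring
  omega

/-- For every integer d ≥ 1, the automorphisms φ of the CFI gadget X_d
satisfying φ({a_i, b_i}) = {a_i, b_i} for every i ∈ [d] are exactly the maps σ_S with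
S ⊆ [d] of even cardinality (each σ_S being such an automorphism), distinct even
subsets S giving distinct automorphisms; consequently there are exactly 2^(d−1)
such automorphisms. -/
theorem cfi_aut_classification (d : ℕ) (hd : 1 ≤ d) :
    (∀ φ : (CFI d) ≃g (CFI d),
        (∀ i : Fin d,
            (φ : CFIVertex d → CFIVertex d) '' {CFIVertex.a i, CFIVertex.b i}
              = {CFIVertex.a i, CFIVertex.b i}) ↔
          ∃ (S : Finset (Fin d)) (hS : Even S.card), ∀ x, φ x = sigmaS d S hS x) ∧
    (∀ (S : Finset (Fin d)) (hS : Even S.card),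
        ∃ φ : (CFI d) ≃g (CFI d), ∀ x, φ x = sigmaS d S hS x) ∧
    (∀ (S T : Finset (Fin d)) (hS : Even S.card) (hT : Even T.card),
        (∀ x, sigmaS d S hS x = sigmaS d T hT x) → S = T) ∧
    Nat.card {φ : (CFI d) ≃g (CFI d) //
        ∀ i : Fin d,
          (φ : CFIVertex d → CFIVertex d) '' {CFIVertex.a i, CFIVertex.b i}
            = {CFIVertex.a i, CFIVertex.b i}} = 2 ^ (d - 1) := by
  classical
  have part3 : ∀ (S T : Finset (Fin d)) (hS : Even S.card) (hT : Even T.card),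
      (∀ x, sigmaS d S hS x = sigmaS d T hT x) → S = T := by
    intro S T hS hT h
    have := h (.m ⟨∅, by simp⟩)
    simp only [sigmaS, CFIVertex.m.injEq, Subtype.mk.injEq] at this
    rw [show (∅ : Finset (Fin d)) = ⊥ from rfl, bot_symmDiff, bot_symmDiff] at this
    exact this
  refine ⟨?_, fun S hS => ⟨sigmaIso d S hS, fun x => rfl⟩, part3, ?_⟩
  · intro φ
    constructor
    · exact cfi_classify d hd φ
    · rintro ⟨S, hS, h⟩ i
      rw [Set.image_pair, h, h]
      have := sigmaIso_pairs d S hS i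
      rwa [Set.image_pair] at this
  · have e : {S : Finset (Fin d) // Even S.card} ≃
        {φ : (CFI d) ≃g (CFI d) //
          ∀ i : Fin d,
            (φ : CFIVertex d → CFIVertex d) '' {CFIVertex.a i, CFIVertex.b i}
              = {CFIVertex.a i, CFIVertex.b i}} := by
      refine Equiv.ofBijective
        (fun S => ⟨sigmaIso d S.1 S.2, sigmaIso_pairs d S.1 S.2⟩) ⟨?_, ?_⟩
      · intro S T h
        simp only [Subtype.mk.injEq] at h
        exact Subtype.ext (part3 S.1 T.1 S.2 T.2 (fun x => by
          have hx := congrArg (fun ψ : (CFI d) ≃g (CFI d) => (ψ : CFIVertex d → CFIVertex d) x) h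
          exact hx))
      · rintro ⟨φ, hφ⟩
        obtain ⟨S, hS, h⟩ := cfi_classify d hd φ hφ
        exact ⟨⟨S, hS⟩, Subtype.ext (RelIso.ext fun x => (h x).symm)⟩
    rw [← Nat.card_congr e, Nat.card_eq_fintype_card, Fintype.card_subtype]
    exact card_even_subsets d hd
end

section
/- For every integer d ≥ 3, the CFI gadget X_d is connected and its diameter equals 4; that is, any two vertices of X_d are at graph distance at most 4, and some pair of vertices is at graph distance exactly 4. -/
open scoped symmDiff

namespace CFIaux

open CFIVertex SimpleGraph

variable {d : ℕ}


lemma adjAM {i : Fin d} {S : {S : Finset (Fin d) // Even S.card}} (h : i ∈ S.1) :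
    (CFI d).Adj (.a i) (.m S) := h

lemma adjMA {i : Fin d} {S : {S : Finset (Fin d) // Even S.card}} (h : i ∈ S.1) :
    (CFI d).Adj (.m S) (.a i) := h

lemma adjBM {i : Fin d} {S : {S : Finset (Fin d) // Even S.card}} (h : i ∉ S.1) :
    (CFI d).Adj (.b i) (.m S) := h

lemma adjMB {i : Fin d} {S : {S : Finset (Fin d) // Even S.card}} (h : i ∉ S.1) :
    (CFI d).Adj (.m S) (.b i) := h

def pairS (i j : Fin d) (h : i ≠ j) : {S : Finset (Fin d) // Even S.card} :=
  ⟨{i, j}, by rw [Finset.card_pair h]; exact even_two⟩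

def emptyS (d : ℕ) : {S : Finset (Fin d) // Even S.card} := ⟨∅, by simp⟩

lemma mem_pairS_left {i j : Fin d} (h : i ≠ j) : i ∈ (pairS i j h).1 := by simp [pairS]

lemma mem_pairS_right {i j : Fin d} (h : i ≠ j) : j ∈ (pairS i j h).1 := by simp [pairS]

lemma not_mem_pairS {i j k : Fin d} (h : i ≠ j) (hk1 : k ≠ i) (hk2 : k ≠ j) :
    k ∉ (pairS i j h).1 := by simp [pairS, hk1, hk2]

lemma not_mem_emptyS (i : Fin d) : i ∉ (emptyS d).1 := by simp [emptyS]

lemma exists_ne_ne (hd : 3 ≤ d) (i j : Fin d) : ∃ k : Fin d, k ≠ i ∧ k ≠ j := by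
  by_contra h
  push_neg at h
  have hsub : (Finset.univ : Finset (Fin d)) ⊆ {i, j} := by
    intro k _
    rcases eq_or_ne k i with hk | hk
    · simp [hk]
    · simp [h k hk]
  have h1 : (Finset.univ : Finset (Fin d)).card ≤ ({i, j} : Finset (Fin d)).card :=
    Finset.card_le_card hsub
  have h2 : ({i, j} : Finset (Fin d)).card ≤ 2 :=
    (Finset.card_insert_le _ _).trans (by simp)
  simp [Finset.card_univ] at h1
  omega

lemma walk_aa (i j : Fin d) : ∃ w : (CFI d).Walk (.a i) (.a j), w.length ≤ 2 := by
  rcases eq_or_ne i j with rfl | hij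
  · exact ⟨.nil, by simp⟩
  · exact ⟨.cons (adjAM (mem_pairS_left hij)) (.cons (adjMA (mem_pairS_right hij)) .nil), by simp⟩

lemma walk_bb (i j : Fin d) : ∃ w : (CFI d).Walk (.b i) (.b j), w.length ≤ 2 := by
  rcases eq_or_ne i j with rfl | hij
  · exact ⟨.nil, by simp⟩
  · exact ⟨.cons (adjBM (not_mem_emptyS i)) (.cons (adjMB (not_mem_emptyS j)) .nil), by simp⟩

lemma walk_ab (hd : 3 ≤ d) (i j : Fin d) :
    ∃ w : (CFI d).Walk (.a i) (.b j), w.length ≤ 4 := by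
  rcases eq_or_ne i j with rfl | hij
  · obtain ⟨k, hki, -⟩ := exists_ne_ne hd i i
    obtain ⟨l, hli, hlk⟩ := exists_ne_ne hd i k
    refine ⟨.cons (adjAM (mem_pairS_left hki.symm))
      (.cons (adjMB (not_mem_pairS hki.symm hli hlk))
      (.cons (adjBM (not_mem_emptyS l)) (.cons (adjMB (not_mem_emptyS i)) .nil))), by simp⟩
  · obtain ⟨k, hki, hkj⟩ := exists_ne_ne hd i j
    refine ⟨.cons (adjAM (mem_pairS_left hki.symm))
      (.cons (adjMB (not_mem_pairS hki.symm (Ne.symm hij) (Ne.symm hkj))) .nil), by simp⟩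

lemma walk_am (hd : 3 ≤ d) (i : Fin d) (S : {S : Finset (Fin d) // Even S.card}) :
    ∃ w : (CFI d).Walk (.a i) (.m S), w.length ≤ 3 := by
  by_cases hi : i ∈ S.1
  · exact ⟨.cons (adjAM hi) .nil, by simp⟩
  · rcases S.1.eq_empty_or_nonempty with hS | ⟨j, hj⟩
    · obtain ⟨k, hki, -⟩ := exists_ne_ne hd i i
      obtain ⟨l, hli, hlk⟩ := exists_ne_ne hd i k
      have hlS : l ∉ S.1 := by rw [hS]; simp
      exact ⟨.cons (adjAM (mem_pairS_left hki.symm))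
        (.cons (adjMB (not_mem_pairS hki.symm hli hlk)) (.cons (adjBM hlS) .nil)), by simp⟩
    · have hij : i ≠ j := fun h => hi (h ▸ hj)
      exact ⟨.cons (adjAM (mem_pairS_left hij))
        (.cons (adjMA (mem_pairS_right hij)) (.cons (adjAM hj) .nil)), by simp⟩

lemma walk_bm (hd : 3 ≤ d) (i : Fin d) (S : {S : Finset (Fin d) // Even S.card}) :
    ∃ w : (CFI d).Walk (.b i) (.m S), w.length ≤ 3 := by
  by_cases hi : i ∈ S.1
  · have hcard : 2 ≤ S.1.card := by
      have h1 : 0 < S.1.card := Finset.card_pos.mpr ⟨i, hi⟩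
      rcases S.2 with ⟨n, hn⟩
      omega
    have herase : (S.1.erase i).Nonempty := by
      rw [← Finset.card_pos, Finset.card_erase_of_mem hi]
      omega
    obtain ⟨j, hj⟩ := herase
    have hji : j ≠ i := (Finset.mem_erase.mp hj).1
    have hjS : j ∈ S.1 := (Finset.mem_erase.mp hj).2
    obtain ⟨k, hki, hkj⟩ := exists_ne_ne hd i j
    have hjk : j ≠ k := Ne.symm hkj
    exact ⟨.cons (adjBM (not_mem_pairS hjk (Ne.symm hji) (Ne.symm hki)))
      (.cons (adjMA (mem_pairS_left hjk)) (.cons (adjAM hjS) .nil)), by simp⟩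
  · exact ⟨.cons (adjBM hi) .nil, by simp⟩

lemma walk_mm (hd : 3 ≤ d) (S T : {S : Finset (Fin d) // Even S.card}) :
    ∃ w : (CFI d).Walk (.m S) (.m T), w.length ≤ 4 := by
  rcases S.1.eq_empty_or_nonempty with hS | ⟨j, hj⟩
  · rcases T.1.eq_empty_or_nonempty with hT | ⟨j, hj⟩
    · have : S = T := Subtype.ext (hS.trans hT.symm)
      exact ⟨this ▸ .nil, by subst this; simp⟩
    · obtain ⟨k, hkj, -⟩ := exists_ne_ne hd j j
      obtain ⟨l, hlj, hlk⟩ := exists_ne_ne hd j k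
      have hlS : l ∉ S.1 := by rw [hS]; simp
      have hjk : j ≠ k := Ne.symm hkj
      exact ⟨.cons (adjMB hlS) (.cons (adjBM (not_mem_pairS hjk hlj hlk))
        (.cons (adjMA (mem_pairS_left hjk)) (.cons (adjAM hj) .nil))), by simp⟩
  · rcases T.1.eq_empty_or_nonempty with hT | ⟨j', hj'⟩
    · obtain ⟨k, hkj, -⟩ := exists_ne_ne hd j j
      obtain ⟨l, hlj, hlk⟩ := exists_ne_ne hd j k
      have hlT : l ∉ T.1 := by rw [hT]; simp
      have hjk : j ≠ k := Ne.symm hkj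
      exact ⟨.cons (adjMA hj) (.cons (adjAM (mem_pairS_left hjk))
        (.cons (adjMB (not_mem_pairS hjk hlj hlk)) (.cons (adjBM hlT) .nil))), by simp⟩
    · rcases eq_or_ne j j' with rfl | hjj'
      · exact ⟨.cons (adjMA hj) (.cons (adjAM hj') .nil), by simp⟩
      · exact ⟨.cons (adjMA hj) (.cons (adjAM (mem_pairS_left hjj'))
          (.cons (adjMA (mem_pairS_right hjj')) (.cons (adjAM hj') .nil))), by simp⟩

lemma exists_walk (hd : 3 ≤ d) (x y : CFIVertex d) :
    ∃ w : (CFI d).Walk x y, w.length ≤ 4 := by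
  cases x with
  | a i =>
    cases y with
    | a j => obtain ⟨w, h⟩ := walk_aa i j; exact ⟨w, by omega⟩
    | b j => exact walk_ab hd i j
    | m T => obtain ⟨w, h⟩ := walk_am hd i T; exact ⟨w, by omega⟩
  | b i =>
    cases y with
    | a j => obtain ⟨w, h⟩ := walk_ab hd j i; exact ⟨w.reverse, by simpa using h⟩
    | b j => obtain ⟨w, h⟩ := walk_bb i j; exact ⟨w, by omega⟩
    | m T => obtain ⟨w, h⟩ := walk_bm hd i T; exact ⟨w, by omega⟩
  | m S =>
    cases y with
    | a j => obtain ⟨w, h⟩ := walk_am hd j S; exact ⟨w.reverse, by simp; omega⟩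
    | b j => obtain ⟨w, h⟩ := walk_bm hd j S; exact ⟨w.reverse, by simp; omega⟩
    | m T => exact walk_mm hd S T

lemma four_le_length (i : Fin d) (w : (CFI d).Walk (.a i) (.b i)) : 4 ≤ w.length := by
  cases w with
  | cons h₁ w₁ =>
    rename_i v₁
    cases v₁ with
    | a j => exact h₁.elim
    | b j => exact h₁.elim
    | m S =>
      cases w₁ with
      | cons h₂ w₂ =>
        rename_i v₂
        cases v₂ with
        | m T => exact h₂.elim
        | b j =>
          cases w₂ with
          | nil => exact absurd h₁ h₂
          | cons h₃ w₃ =>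
            rename_i v₃
            cases v₃ with
            | a k => exact h₃.elim
            | b k => exact h₃.elim
            | m T =>
              cases w₃ with
              | cons h₄ w₄ => simp [SimpleGraph.Walk.length_cons]
        | a j =>
          cases w₂ with
          | cons h₃ w₃ =>
            rename_i v₃
            cases v₃ with
            | a k => exact h₃.elim
            | b k => exact h₃.elim
            | m T =>
              cases w₃ with
              | cons h₄ w₄ => simp [SimpleGraph.Walk.length_cons]

end CFIaux

/-- For every integer d ≥ 3, the CFI gadget X_d is connected and its
diameter equals 4: any two vertices are at graph distance at most 4, and some pair
of vertices is at graph distance exactly 4. -/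
theorem cfi_connected_and_diameter_four (d : ℕ) (hd : 3 ≤ d) :
    (CFI d).Connected ∧
      (∀ x y : CFIVertex d, (CFI d).dist x y ≤ 4) ∧
      (∃ x y : CFIVertex d, (CFI d).dist x y = 4) := by
  have hdle : ∀ x y : CFIVertex d, (CFI d).dist x y ≤ 4 := by
    intro x y
    obtain ⟨w, h⟩ := CFIaux.exists_walk hd x y
    exact (SimpleGraph.dist_le w).trans h
  have hconn : (CFI d).Connected := by
    haveI : Nonempty (CFIVertex d) := ⟨.a ⟨0, by omega⟩⟩
    exact SimpleGraph.Connected.mk fun x y =>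
      ((CFIaux.exists_walk hd x y).choose).reachable
  refine ⟨hconn, hdle, ⟨.a ⟨0, by omega⟩, .b ⟨0, by omega⟩, ?_⟩⟩
  refine le_antisymm (hdle _ _) ?_
  obtain ⟨p, hp⟩ := (hconn _ _).exists_walk_length_eq_dist
  rw [← hp]
  exact CFIaux.four_le_length _ p
end

section
/- The 4×4 rook's graph R and the Shrikhande graph S are not isomorphic. -/
open SimpleGraph

/-- The 4×4 rook's graph: the box product K_4 □ K_4 of two complete graphs on 4
vertices. Two distinct pairs are adjacent iff they agree in exactly one coordinate. -/
def rook : SimpleGraph (Fin 4 × Fin 4) :=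
  (⊤ : SimpleGraph (Fin 4)) □ (⊤ : SimpleGraph (Fin 4))

instance : DecidableRel rook.Adj := fun x y =>
  decidable_of_iff ((x.1 ≠ y.1 ∧ x.2 = y.2) ∨ (x.2 ≠ y.2 ∧ x.1 = y.1))
    (by simp [rook, SimpleGraph.boxProd_adj])

/-- The connection set of the Shrikhande graph:
C = {±(1,0), ±(0,1), ±(1,1)} ⊆ ℤ/4ℤ × ℤ/4ℤ. -/
def shrikhandeC : Finset (ZMod 4 × ZMod 4) :=
  {(1, 0), (-1, 0), (0, 1), (0, -1), (1, 1), (-1, -1)}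

/-- The Shrikhande graph: the Cayley graph on ℤ/4ℤ × ℤ/4ℤ with connection set
C = {±(1,0), ±(0,1), ±(1,1)}; two vertices are adjacent iff their difference is in C. -/
def shrikhande : SimpleGraph (ZMod 4 × ZMod 4) where
  Adj x y := x - y ∈ shrikhandeC
  symm := by
    refine ⟨?_⟩
    show ∀ x y : ZMod 4 × ZMod 4, x - y ∈ shrikhandeC → y - x ∈ shrikhandeC
    decide
  loopless := by
    refine ⟨?_⟩
    show ∀ x : ZMod 4 × ZMod 4, x - x ∈ shrikhandeC → False
    decide

instance : DecidableRel shrikhande.Adj := fun x y =>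
  inferInstanceAs (Decidable (x - y ∈ shrikhandeC))
/-- The 4×4 rook's graph R and the Shrikhande graph S are not
isomorphic. -/
theorem rook_not_iso_shrikhande : ¬ Nonempty (rook ≃g shrikhande) := by
  rintro ⟨e⟩
  have adj_sub : ∀ a x y : ZMod 4 × ZMod 4,
      shrikhande.Adj (x - a) (y - a) ↔ shrikhande.Adj x y := by
    intro a x y
    show (x - a) - (y - a) ∈ shrikhandeC ↔ x - y ∈ shrikhandeC
    rw [sub_sub_sub_cancel_right]
  have key0 : ∀ b c d : ZMod 4 × ZMod 4,
      ¬(shrikhande.Adj 0 b ∧ shrikhande.Adj 0 c ∧ shrikhande.Adj 0 d ∧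
        shrikhande.Adj b c ∧ shrikhande.Adj b d ∧ shrikhande.Adj c d) := by decide
  have key : ∀ a b c d : ZMod 4 × ZMod 4,
      ¬(shrikhande.Adj a b ∧ shrikhande.Adj a c ∧ shrikhande.Adj a d ∧
        shrikhande.Adj b c ∧ shrikhande.Adj b d ∧ shrikhande.Adj c d) := by
    intro a b c d ⟨h1, h2, h3, h4, h5, h6⟩
    refine key0 (b - a) (c - a) (d - a) ⟨?_, ?_, ?_, ?_, ?_, ?_⟩
    · rw [show (0 : ZMod 4 × ZMod 4) = a - a by rw [sub_self], adj_sub]; exact h1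
    · rw [show (0 : ZMod 4 × ZMod 4) = a - a by rw [sub_self], adj_sub]; exact h2
    · rw [show (0 : ZMod 4 × ZMod 4) = a - a by rw [sub_self], adj_sub]; exact h3
    · rw [adj_sub]; exact h4
    · rw [adj_sub]; exact h5
    · rw [adj_sub]; exact h6
  refine key (e (0,0)) (e (0,1)) (e (0,2)) (e (0,3)) ⟨?_, ?_, ?_, ?_, ?_, ?_⟩ <;>
    rw [e.map_adj_iff] <;> decide
end
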